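/- arXiv:2412.18643 — 5 statements merged into one kernel-verified Lean document; each statement's English description precedes it below -/
import Mathlib

section
/- For every discrete group G, every p ∈ [1,∞), and every finitely supported function f : G → ℂ, the operator norm of the left regular representation λ_p(f) on ℓ^p(G) equals the operator norm of the right regular representation ρ_p(f) on ℓ^p(G). -/
open scoped ENNReal ComplexOrder
open Filter Topology

/-- `lam` is the left regular representation: `lam s` sends `δ_t` to `δ_{s t}`. -/
def IsLeftReg {G : Type*} [Group G] [DecidableEq G] {p : ℝ≥0∞} [Fact (1 ≤ p)]
    (lam : G → (lp (fun _ : G => ℂ) p →L[ℂ] lp (fun _ : G => ℂ) p)) : Prop :=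
  ∀ s t : G, lam s (lp.single (E := fun _ : G => ℂ) p t 1) =
    lp.single (E := fun _ : G => ℂ) p (s * t) 1

/-- `rho` is the right regular representation: `rho s` sends `δ_t` to `δ_{t s⁻¹}`. -/
def IsRightReg {G : Type*} [Group G] [DecidableEq G] {p : ℝ≥0∞} [Fact (1 ≤ p)]
    (rho : G → (lp (fun _ : G => ℂ) p →L[ℂ] lp (fun _ : G => ℂ) p)) : Prop :=
  ∀ s t : G, rho s (lp.single (E := fun _ : G => ℂ) p t 1) =
    lp.single (E := fun _ : G => ℂ) p (t * s⁻¹) 1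

/-- Extension of a representation to finitely supported functions: `opOf lam f = Σ_s f(s) • lam s`. -/
noncomputable def opOf {G : Type*} [Group G] {p : ℝ≥0∞} [Fact (1 ≤ p)]
    (lam : G → (lp (fun _ : G => ℂ) p →L[ℂ] lp (fun _ : G => ℂ) p)) (f : G →₀ ℂ) :
    lp (fun _ : G => ℂ) p →L[ℂ] lp (fun _ : G => ℂ) p :=
  f.sum fun s c => c • lam s

/-- A vector in `ℓ^p(G)` is nonnegative if all its coordinates are nonnegative reals. -/
def IsNonneg {G : Type*} {p : ℝ≥0∞} [Fact (1 ≤ p)] (ξ : lp (fun _ : G => ℂ) p) : Prop :=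
  ∀ t : G, 0 ≤ ξ t

/-!
The flip `J ξ (t) = ξ (t⁻¹)` is an isometric involution of `ℓ^p(G)` conjugating the left regular
representation into the right one: `J λ_p(s) J = ρ_p(s)`. Conjugation is linear, so
`J λ_p(f) J = ρ_p(f)`, and conjugating by an isometric isomorphism preserves operator norms.
-/

namespace lp

variable {p : ℝ≥0∞} {α β 𝕜 E : Type*}

theorem memℓp_comp_equiv [NormedAddCommGroup E] (e : α ≃ β) {f : β → E} (hf : Memℓp f p) :
    Memℓp (f ∘ e) p := by
  rcases p.trichotomy with rfl | rfl | hp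
  · exact memℓp_zero (hf.finite_dsupport.preimage e.injective.injOn)
  · exact memℓp_infty (e.surjective.range_comp (fun b => ‖f b‖) ▸ hf.bddAbove)
  · exact memℓp_gen <| (e.summable_iff (f := fun b => ‖f b‖ ^ p.toReal)).2 (hf.summable hp)

variable [NormedAddCommGroup E] [NormedField 𝕜] [NormedSpace 𝕜 E] [Fact (1 ≤ p)]

variable (p 𝕜 E) in
noncomputable def congrLeft (e : α ≃ β) :
    lp (fun _ : α => E) p ≃ₗᵢ[𝕜] lp (fun _ : β => E) p where
  toFun ξ := ⟨ξ ∘ e.symm, memℓp_comp_equiv e.symm ξ.2⟩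
  invFun ξ := ⟨ξ ∘ e, memℓp_comp_equiv e ξ.2⟩
  left_inv ξ := by ext a; simp
  right_inv ξ := by ext b; simp
  map_add' ξ η := rfl
  map_smul' c ξ := rfl
  norm_map' ξ := by
    rcases p.dichotomy with rfl | hp
    · exact e.symm.iSup_comp (g := fun a => ‖ξ a‖)
    · have hp' : 0 < p.toReal := zero_lt_one.trans_le hp
      simp only [norm_eq_tsum_rpow hp']
      exact congrArg (· ^ _) (e.symm.tsum_eq (fun a => ‖ξ a‖ ^ p.toReal))

@[simp]
theorem congrLeft_apply (e : α ≃ β) (ξ : lp (fun _ : α => E) p) (b : β) :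
    congrLeft p 𝕜 E e ξ b = ξ (e.symm b) :=
  rfl

theorem congrLeft_single [DecidableEq α] [DecidableEq β] (e : α ≃ β) (a : α) (x : E) :
    congrLeft p 𝕜 E e (lp.single (E := fun _ : α => E) p a x) =
      lp.single (E := fun _ : β => E) p (e a) x := by
  ext b
  simp [lp.single_apply, Pi.single_apply, e.symm_apply_eq]

theorem continuousLinearMap_ext_single [DecidableEq α] {F : Type*} [NormedAddCommGroup F] [NormedSpace 𝕜 F]
    (hp : p ≠ ⊤) {T S : lp (fun _ : α => 𝕜) p →L[𝕜] F}
    (h : ∀ a, T (lp.single (E := fun _ : α => 𝕜) p a 1) = S (lp.single p a 1)) : T = S := by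
  ext ξ
  have hsingle (a : α) :
      lp.single p a (ξ a) = ξ a • lp.single (E := fun _ : α => 𝕜) p a 1 := by
    rw [← lp.single_smul, smul_eq_mul, mul_one]
  have hξ := lp.hasSum_single hp ξ
  simp only [hsingle] at hξ
  refine (hξ.mapL T).unique ?_
  simpa only [map_smul, h] using hξ.mapL S

end lp

section RegularRepresentation

variable {G : Type*} [Group G] {p : ℝ≥0∞} [Fact (1 ≤ p)]

local notation "ℓp" => lp (fun _ : G => ℂ) p

local notation "J" => (lp.congrLeft p ℂ ℂ (Equiv.inv G) : ℓp →L[ℂ] ℓp)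

theorem opOf_conj (lam : G → (ℓp →L[ℂ] ℓp)) (A B : ℓp →L[ℂ] ℓp) (f : G →₀ ℂ) :
    opOf (fun s => A ∘L lam s ∘L B) f = A ∘L opOf lam f ∘L B := by
  simp only [opOf, Finsupp.sum, ContinuousLinearMap.comp_finsetSum,
    ContinuousLinearMap.finsetSum_comp, ContinuousLinearMap.comp_smul,
    ContinuousLinearMap.smul_comp]

variable [DecidableEq G]

-- Both sides send `δ_t` to `δ_{t s⁻¹}`, and the `δ_t` span a dense subspace since `p < ∞`.
theorem IsRightReg.eq_conj_of_isLeftReg {lam rho : G → (ℓp →L[ℂ] ℓp)} (hp : p ≠ ⊤)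
    (hlam : IsLeftReg lam) (hrho : IsRightReg rho) : rho = fun s => J ∘L lam s ∘L J := by
  ext1 s
  refine lp.continuousLinearMap_ext_single hp fun t => ?_
  simp [hrho s t, hlam s t⁻¹, lp.congrLeft_single]

end RegularRepresentation

theorem stmt0 {G : Type*} [Group G] [DecidableEq G] {p : ℝ≥0∞} [Fact (1 ≤ p)] (hp : p ≠ ⊤)
    (lam rho : G → (lp (fun _ : G => ℂ) p →L[ℂ] lp (fun _ : G => ℂ) p))
    (hlam : IsLeftReg lam) (hrho : IsRightReg rho) (f : G →₀ ℂ) :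
    ‖opOf lam f‖ = ‖opOf rho f‖ := by
  rw [hrho.eq_conj_of_isLeftReg hp hlam, opOf_conj]
  exact ((LinearIsometry.norm_toContinuousLinearMap_comp _).trans
    (ContinuousLinearMap.opNorm_comp_linearIsometryEquiv _ _)).symm
end

section
/- Let G be a discrete group and p ∈ (1,∞). Suppose that for every finite subset E ⊆ G containing the identity, ‖Σ_{t∈E} λ_p(t)‖ = |E| as an operator on ℓ^p(G). Then G is amenable, i.e. there exists a net (f_α) in ℓ^p(G) with f_α ≥ 0, ‖f_α‖_p = 1, and ‖λ_p(s)f_α − f_α‖_p → 0 for all s ∈ G. -/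
open scoped ENNReal ComplexOrder
open Filter Topology

/-! For nonnegative unit vectors of `ℓ^p(G)`, `‖a + b‖ → 2` forces `‖a - b‖ → 0`. Pointwise,
for any `η ∈ (0, 1]`, either `|x - y| ≤ η (x + y)`, or the pair `(x, y)` is so spread out that strict convexity of
`t ↦ t ^ p` bounds `|x - y| ^ p` by a multiple of the convexity defect
`x ^ p + y ^ p - 2 ((x + y) / 2) ^ p`, whose sum over `G` is `2 - 2 (‖a + b‖ / 2) ^ p`.

Given a finite `F ⊆ G`, put `E = F ∪ {1}`. The coordinatewise absolute value of an almost norming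
unit vector of `∑ t ∈ E, λ(t)` is a nonnegative unit vector `ξ` with `‖λ(s) ξ + ξ‖ > 2 - δ` for
`s ∈ F`, because the other `|E| - 2` terms contribute norm at most `|E| - 2`. -/

open Set

theorem ConvexOn.map_add_map_le_of_abs_sub_le {s : Set ℝ} {φ : ℝ → ℝ} (hφ : ConvexOn ℝ s φ)
    {x y x' y' : ℝ} (hx : x ∈ s) (hy : y ∈ s) (hsum : x' + y' = x + y)
    (hd : |x' - y'| ≤ |x - y|) : φ x' + φ y' ≤ φ x + φ y := by
  rcases eq_or_ne x y with rfl | hxy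
  · have hd0 : x' - y' = 0 := by simpa using hd
    rw [show x' = x by linarith, show y' = x by linarith]
  set c := (x' - y) / (x - y)
  have hxy' : x - y ≠ 0 := sub_ne_zero.2 hxy
  have hc : |2 * c - 1| ≤ 1 := by
    have : 2 * c - 1 = (x' - y') / (x - y) := by
      simp only [c]; field_simp; linarith
    rw [this, abs_div]
    exact div_le_one_of_le₀ hd (abs_nonneg _)
  obtain ⟨hc0, hc1⟩ : 0 ≤ c ∧ 0 ≤ 1 - c := by
    constructor <;> linarith [(abs_le.1 hc).1, (abs_le.1 hc).2]
  have hx' : c • x + (1 - c) • y = x' := by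
    simp only [smul_eq_mul, c]; field_simp; ring
  have hy' : (1 - c) • x + c • y = y' := by
    rw [show y' = x + y - x' by linarith]
    simp only [smul_eq_mul, c]; field_simp; ring
  have h1 := hφ.2 hx hy hc0 hc1 (by ring)
  have h2 := hφ.2 hx hy hc1 hc0 (by ring)
  rw [hx'] at h1
  rw [hy'] at h2
  simp only [smul_eq_mul] at h1 h2
  linarith

theorem two_lt_one_add_rpow_add_one_sub_rpow {r η : ℝ} (hr : 1 < r) (hη0 : 0 < η) (hη1 : η ≤ 1) :
    2 < (1 + η) ^ r + (1 - η) ^ r := by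
  have h := (strictConvexOn_rpow hr).2 (x := 1 + η) (y := 1 - η)
    (by simp only [mem_Ici]; linarith) (by simp only [mem_Ici]; linarith) (by linarith)
    (by norm_num : (0 : ℝ) < 1 / 2) (by norm_num : (0 : ℝ) < 1 / 2) (by norm_num)
  simp only [smul_eq_mul] at h
  rw [show 1 / 2 * (1 + η) + 1 / 2 * (1 - η) = (1 : ℝ) by ring, Real.one_rpow] at h
  linarith

theorem abs_sub_rpow_le {r η x y : ℝ} (hr : 1 < r) (hη0 : 0 < η) (hη1 : η ≤ 1)
    (hx : 0 ≤ x) (hy : 0 ≤ y) :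
    |x - y| ^ r ≤ η ^ r * (x + y) ^ r +
      2 ^ r / ((1 + η) ^ r + (1 - η) ^ r - 2) * (x ^ r + y ^ r - 2 * ((x + y) / 2) ^ r) := by
  have hconv := convexOn_rpow hr.le
  have hxs : x ∈ Ici (0 : ℝ) := hx
  have hys : y ∈ Ici (0 : ℝ) := hy
  have hA : 0 < (1 + η) ^ r + (1 - η) ^ r - 2 := by
    linarith [two_lt_one_add_rpow_add_one_sub_rpow hr hη0 hη1]
  have hdefect : 0 ≤ x ^ r + y ^ r - 2 * ((x + y) / 2) ^ r := by
    have := hconv.map_add_map_le_of_abs_sub_le hxs hys (x' := (x + y) / 2) (y' := (x + y) / 2)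
      (by ring) (by simp)
    linarith
  have hm : 0 ≤ (x + y) / 2 := by positivity
  have hsub : |x - y| ≤ x + y := abs_sub_le_iff.2 ⟨by linarith, by linarith⟩
  rcases le_or_gt |x - y| (η * (x + y)) with hsmall | hlarge
  · have : |x - y| ^ r ≤ η ^ r * (x + y) ^ r := by
      rw [← Real.mul_rpow hη0.le (by positivity)]
      exact Real.rpow_le_rpow (abs_nonneg _) hsmall (by linarith)
    exact le_add_of_le_of_nonneg this (by positivity)
  · set m := (x + y) / 2
    have hmaj := hconv.map_add_map_le_of_abs_sub_le hxs hys (x' := m * (1 + η)) (y' := m * (1 - η))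
      (by ring) (by rw [abs_of_nonneg (by nlinarith)]; simp only [m]; linarith)
    rw [Real.mul_rpow hm (by linarith), Real.mul_rpow hm (by linarith)] at hmaj
    have hlow : m ^ r * ((1 + η) ^ r + (1 - η) ^ r - 2) ≤ x ^ r + y ^ r - 2 * m ^ r := by
      linarith
    calc |x - y| ^ r ≤ (x + y) ^ r := Real.rpow_le_rpow (abs_nonneg _) hsub (by linarith)
      _ = 2 ^ r * m ^ r := by rw [← Real.mul_rpow (by norm_num) hm]; simp only [m]; ring_nf
      _ ≤ 2 ^ r / ((1 + η) ^ r + (1 - η) ^ r - 2) * (x ^ r + y ^ r - 2 * m ^ r) := by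
        rw [div_mul_eq_mul_div, le_div_iff₀ hA, mul_assoc]
        gcongr
      _ ≤ _ := le_add_of_nonneg_left (by positivity)

theorem lt_norm_add_of_lt_norm_sum {E ι : Type*} [SeminormedAddCommGroup E] [DecidableEq ι]
    {S : Finset ι} {v : ι → E} (hv : ∀ t ∈ S, ‖v t‖ ≤ 1) {i j : ι} (hi : i ∈ S) (hj : j ∈ S)
    (hij : i ≠ j) {δ : ℝ} (h : S.card - δ < ‖∑ t ∈ S, v t‖) : 2 - δ < ‖v i + v j‖ := by
  have hj' : j ∈ S.erase i := Finset.mem_erase.2 ⟨hij.symm, hj⟩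
  have hsplit : ∑ t ∈ S, v t = v i + v j + ∑ t ∈ (S.erase i).erase j, v t := by
    rw [← Finset.add_sum_erase S v hi, ← Finset.add_sum_erase _ v hj', add_assoc]
  have hcard : (((S.erase i).erase j).card : ℝ) = S.card - 2 := by
    have h2 : 1 < S.card := Finset.one_lt_card.2 ⟨i, hi, j, hj, hij⟩
    rw [Finset.card_erase_of_mem hj', Finset.card_erase_of_mem hi, Nat.cast_sub (by omega),
      Nat.cast_sub (by omega)]
    ring
  have hrest : ‖∑ t ∈ (S.erase i).erase j, v t‖ ≤ S.card - 2 := by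
    rw [← hcard]
    simpa using norm_sum_le_of_le _ fun t ht =>
      hv t (Finset.mem_of_mem_erase (Finset.mem_of_mem_erase ht))
  have := h.trans_le ((hsplit ▸ norm_add_le _ _))
  linarith

theorem Complex.norm_add_of_nonneg {z w : ℂ} (hz : 0 ≤ z) (hw : 0 ≤ w) :
    ‖z + w‖ = ‖z‖ + ‖w‖ := by
  rw [eq_coe_norm_of_nonneg hz, eq_coe_norm_of_nonneg hw, ← ofReal_add, norm_real,
    Real.norm_of_nonneg (by positivity), norm_real, norm_real, norm_norm, norm_norm]

theorem Complex.norm_sub_of_nonneg {z w : ℂ} (hz : 0 ≤ z) (hw : 0 ≤ w) :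
    ‖z - w‖ = |‖z‖ - ‖w‖| := by
  conv_lhs => rw [eq_coe_norm_of_nonneg hz, eq_coe_norm_of_nonneg hw, ← ofReal_sub, norm_real,
    Real.norm_eq_abs]

section

variable {α : Type*} {p : ℝ≥0∞}

noncomputable def lp.abs (x : lp (fun _ : α => ℂ) p) : lp (fun _ : α => ℂ) p :=
  ⟨fun i => (‖x i‖ : ℂ), Memℓp.of_norm (by simpa using (lp.memℓp x).norm)⟩

theorem lp.abs_apply (x : lp (fun _ : α => ℂ) p) (i : α) : lp.abs x i = (‖x i‖ : ℂ) := rfl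

variable [Fact (1 ≤ p)]

theorem lp.isNonneg_abs (x : lp (fun _ : α => ℂ) p) : IsNonneg (lp.abs x) := fun i => by
  rw [lp.abs_apply]; exact Complex.zero_le_real.2 (norm_nonneg _)

theorem lp.norm_abs (x : lp (fun _ : α => ℂ) p) : ‖lp.abs x‖ = ‖x‖ :=
  le_antisymm (lp.norm_mono (zero_lt_one.trans_le Fact.out).ne' fun i => by simp [lp.abs_apply])
    (lp.norm_mono (zero_lt_one.trans_le Fact.out).ne' fun i => by simp [lp.abs_apply])

theorem IsNonneg.norm_sub_rpow_le {a b : lp (fun _ : α => ℂ) p} (ha : IsNonneg a)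
    (hb : IsNonneg b) (ha1 : ‖a‖ = 1) (hb1 : ‖b‖ = 1) (hr : 1 < p.toReal) {η : ℝ}
    (hη0 : 0 < η) (hη1 : η ≤ 1) :
    ‖a - b‖ ^ p.toReal ≤ η ^ p.toReal * ‖a + b‖ ^ p.toReal +
      2 ^ p.toReal / ((1 + η) ^ p.toReal + (1 - η) ^ p.toReal - 2) *
        (2 - 2 * (‖a + b‖ / 2) ^ p.toReal) := by
  set r := p.toReal
  have hr0 : 0 < r := by linarith
  have hsum (f : lp (fun _ : α => ℂ) p) := lp.hasSum_norm hr0 f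
  have hmid : HasSum (fun i => (‖(a + b) i‖ / 2) ^ r) ((‖a + b‖ / 2) ^ r) := by
    simp only [Real.div_rpow (norm_nonneg _) zero_le_two]
    exact (hsum (a + b)).div_const _
  have hbound := ((hsum (a + b)).mul_left (η ^ r)).add
    ((((hsum a).add (hsum b)).sub (hmid.mul_left 2)).mul_left
      (2 ^ r / ((1 + η) ^ r + (1 - η) ^ r - 2)))
  rw [ha1, hb1, Real.one_rpow, one_add_one_eq_two] at hbound
  refine hasSum_le (fun i => ?_) (hsum (a - b)) hbound
  rw [lp.coeFn_sub, lp.coeFn_add, Pi.sub_apply, Pi.add_apply,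
    Complex.norm_sub_of_nonneg (ha i) (hb i), Complex.norm_add_of_nonneg (ha i) (hb i)]
  exact abs_sub_rpow_le hr hη0 hη1 (norm_nonneg _) (norm_nonneg _)

theorem IsNonneg.tendsto_norm_sub_zero {ι : Type*} {l : Filter ι}
    {a b : ι → lp (fun _ : α => ℂ) p} (ha : ∀ i, IsNonneg (a i)) (hb : ∀ i, IsNonneg (b i))
    (ha1 : ∀ i, ‖a i‖ = 1) (hb1 : ∀ i, ‖b i‖ = 1) (hr : 1 < p.toReal)
    (h : Tendsto (fun i => ‖a i + b i‖) l (𝓝 2)) :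
    Tendsto (fun i => ‖a i - b i‖) l (𝓝 0) := by
  set r := p.toReal
  have hr0 : 0 < r := by linarith
  refine tendsto_order.2 ⟨fun ε hε => Eventually.of_forall fun i => hε.trans_le (norm_nonneg _),
    fun ε hε => ?_⟩
  set η := min (ε / 4) 1
  have hη0 : 0 < η := lt_min (by positivity) one_pos
  have hη1 : η ≤ 1 := min_le_right _ _
  set C := 2 ^ r / ((1 + η) ^ r + (1 - η) ^ r - 2)
  have hbound : Tendsto (fun i => η ^ r * ‖a i + b i‖ ^ r + C * (2 - 2 * (‖a i + b i‖ / 2) ^ r))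
      l (𝓝 ((2 * η) ^ r)) := by
    have := ((h.rpow_const (Or.inr hr0.le)).const_mul (η ^ r)).add
      ((((h.div_const 2).rpow_const (Or.inr hr0.le)).const_mul 2).const_sub 2 |>.const_mul C)
    simpa [Real.mul_rpow zero_le_two hη0.le, mul_comm] using this
  have hlt : (2 * η) ^ r < ε ^ r :=
    Real.rpow_lt_rpow (by positivity) (by linarith [min_le_left (ε / 4) 1]) hr0
  filter_upwards [hbound.eventually (gt_mem_nhds hlt)] with i hi
  have := (IsNonneg.norm_sub_rpow_le (ha i) (hb i) (ha1 i) (hb1 i) hr hη0 hη1).trans_lt hi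
  exact (Real.rpow_lt_rpow_iff (norm_nonneg _) hε.le hr0).1 this

end

namespace IsLeftReg

variable {p : ℝ≥0∞} [Fact (1 ≤ p)] {G : Type*} [Group G] [DecidableEq G]
  {lam : G → (lp (fun _ : G => ℂ) p →L[ℂ] lp (fun _ : G => ℂ) p)}

theorem apply_apply (hlam : IsLeftReg lam) (hp : p ≠ ⊤) (s : G) (x : lp (fun _ : G => ℂ) p)
    (g : G) : lam s x g = x (s⁻¹ * g) := by
  have : (lp.evalCLM ℂ (fun _ : G => ℂ) p g).comp (lam s) = lp.evalCLM ℂ _ p (s⁻¹ * g) := by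
    refine lp.ext_continuousLinearMap hp fun t => ContinuousLinearMap.ext_ring ?_
    simp [lp.evalCLM, hlam s t, Pi.single_apply, eq_inv_mul_iff_mul_eq, eq_comm]
  exact DFunLike.congr_fun this x

theorem norm_apply (hlam : IsLeftReg lam) (hp : p ≠ ⊤) (s : G) (x : lp (fun _ : G => ℂ) p) :
    ‖lam s x‖ = ‖x‖ := by
  have hr : 0 < p.toReal := ENNReal.toReal_pos (zero_lt_one.trans_le Fact.out).ne' hp
  simp only [lp.norm_eq_tsum_rpow hr, hlam.apply_apply hp]
  congr 1
  exact (Equiv.mulLeft s⁻¹).tsum_eq (fun g => ‖x g‖ ^ p.toReal)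

theorem one_apply (hlam : IsLeftReg lam) (hp : p ≠ ⊤) (x : lp (fun _ : G => ℂ) p) :
    lam 1 x = x := by
  ext g
  simp [hlam.apply_apply hp]

theorem isNonneg_apply (hlam : IsLeftReg lam) (hp : p ≠ ⊤) (s : G) {x : lp (fun _ : G => ℂ) p}
    (hx : IsNonneg x) : IsNonneg (lam s x) := fun g => by
  rw [hlam.apply_apply hp]; exact hx _

theorem norm_sum_apply_le_norm_sum_apply_abs (hlam : IsLeftReg lam) (hp : p ≠ ⊤) (E : Finset G)
    (x : lp (fun _ : G => ℂ) p) :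
    ‖(∑ t ∈ E, lam t) x‖ ≤ ‖(∑ t ∈ E, lam t) (lp.abs x)‖ := by
  refine lp.norm_mono (zero_lt_one.trans_le Fact.out).ne' fun g => ?_
  simp only [sum_apply, lp.coeFn_sum, Finset.sum_apply, hlam.apply_apply hp, lp.abs_apply]
  rw [← Complex.ofReal_sum, Complex.norm_real, Real.norm_of_nonneg (by positivity)]
  exact norm_sum_le _ _

theorem exists_isNonneg_lt_norm_sum_apply (hlam : IsLeftReg lam) (hp : p ≠ ⊤) (E : Finset G)
    {c : ℝ} (hc0 : 0 ≤ c) (hc : c < ‖∑ t ∈ E, lam t‖) :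
    ∃ ξ, IsNonneg ξ ∧ ‖ξ‖ = 1 ∧ c < ‖(∑ t ∈ E, lam t) ξ‖ := by
  lift c to NNReal using hc0
  obtain ⟨x, hx1, hx⟩ := (∑ t ∈ E, lam t).exists_nnnorm_eq_one_lt_apply_of_lt_opNNNorm hc
  refine ⟨lp.abs x, lp.isNonneg_abs x, by rw [lp.norm_abs]; exact congrArg NNReal.toReal hx1, ?_⟩
  exact (NNReal.coe_lt_coe.2 hx).trans_le (hlam.norm_sum_apply_le_norm_sum_apply_abs hp E x)

theorem exists_isNonneg_forall_lt_norm_apply_add (hlam : IsLeftReg lam) (hp : p ≠ ⊤)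
    (h : ∀ E : Finset G, (1 : G) ∈ E → ‖∑ t ∈ E, lam t‖ = (E.card : ℝ)) (F : Finset G)
    {δ : ℝ} (hδ0 : 0 < δ) (hδ1 : δ ≤ 1) :
    ∃ ξ, IsNonneg ξ ∧ ‖ξ‖ = 1 ∧ ∀ s ∈ F, 2 - δ < ‖lam s ξ + ξ‖ := by
  set E := insert 1 F
  have hE1 : (1 : G) ∈ E := Finset.mem_insert_self 1 F
  have hcard : (1 : ℝ) ≤ E.card := by exact_mod_cast Finset.card_pos.2 ⟨1, hE1⟩
  obtain ⟨ξ, hξ0, hξ1, hξ⟩ := hlam.exists_isNonneg_lt_norm_sum_apply hp E (c := E.card - δ)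
    (by linarith) (by rw [h E hE1]; linarith)
  refine ⟨ξ, hξ0, hξ1, fun s hs => ?_⟩
  rcases eq_or_ne s 1 with rfl | hs1
  · rw [hlam.one_apply hp, ← two_smul ℂ, norm_smul, hξ1]
    norm_num; linarith
  · rw [sum_apply] at hξ
    simpa only [hlam.one_apply hp] using
      lt_norm_add_of_lt_norm_sum (fun t _ => ((hlam.norm_apply hp t ξ).trans hξ1).le)
        (Finset.mem_insert_of_mem hs) hE1 hs1 hξ

end IsLeftReg

theorem stmt5 {G : Type u} [Group G] [DecidableEq G] {p : ℝ≥0∞} [Fact (1 ≤ p)]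
    (hp : 1 < p) (hp' : p ≠ ⊤)
    (lam : G → (lp (fun _ : G => ℂ) p →L[ℂ] lp (fun _ : G => ℂ) p))
    (hlam : IsLeftReg lam)
    (h : ∀ E : Finset G, (1 : G) ∈ E → ‖∑ t ∈ E, lam t‖ = (E.card : ℝ)) :
    ∃ (ι : Type u) (l : Filter ι) (f : ι → lp (fun _ : G => ℂ) p), l.NeBot ∧
      (∀ α, IsNonneg (f α) ∧ ‖f α‖ = 1) ∧
      ∀ s : G, Tendsto (fun α => ‖lam s (f α) - f α‖) l (𝓝 0) := by
  have hr : 1 < p.toReal := by simpa using ENNReal.toReal_strict_mono hp' hp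
  choose f hf0 hf1 hf using fun α : Finset G × ℕ =>
    hlam.exists_isNonneg_forall_lt_norm_apply_add hp' h α.1 (δ := 1 / (α.2 + 1))
      Nat.one_div_pos_of_nat (div_le_one_of_le₀ (by simp) (by positivity))
  refine ⟨Finset G × ℕ, atTop, f, atTop_neBot, fun α => ⟨hf0 α, hf1 α⟩, fun s => ?_⟩
  refine IsNonneg.tendsto_norm_sub_zero (fun α => hlam.isNonneg_apply hp' s (hf0 α)) hf0
    (fun α => (hlam.norm_apply hp' s _).trans (hf1 α)) hf1 hr ?_
  have hδ : Tendsto (fun α : Finset G × ℕ => 2 - 1 / ((α.2 : ℝ) + 1)) atTop (𝓝 2) := by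
    rw [← prod_atTop_atTop_eq]
    simpa using (tendsto_one_div_add_atTop_nhds_zero_nat.comp tendsto_snd).const_sub (2 : ℝ)
  refine tendsto_of_tendsto_of_tendsto_of_le_of_le' hδ tendsto_const_nhds ?_
    (Eventually.of_forall fun α => ?_)
  · filter_upwards [eventually_ge_atTop ({s}, 0)] with α hα
    exact (hf α s (Finset.singleton_subset_iff.1 hα.1)).le
  · calc ‖lam s (f α) + f α‖ ≤ ‖lam s (f α)‖ + ‖f α‖ := norm_add_le _ _
      _ = 2 := by rw [hlam.norm_apply hp', hf1]; norm_num
end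

section
/- Let G be a discrete amenable group and p ∈ [1,∞). Then for every finitely supported f : G → ℂ, ‖λ_p(f)‖ ≥ |Σ_{t∈G} f(t)|, i.e. the trivial character is dominated by the left regular representation norm. -/
open scoped ENNReal ComplexOrder
open Filter Topology

/-! The trivial character is weakly contained in any representation with almost invariant unit
vectors `ξ`: writing `(∑ f) ξ = ∑ f(s) (ξ - T s ξ) + T(f) ξ`, the first term tends to zero while the
second is bounded by `‖T(f)‖`. -/

section AlmostInvariant

variable {G 𝕜 E : Type*} [NontriviallyNormedField 𝕜] [NormedAddCommGroup E] [NormedSpace 𝕜 E]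

theorem Finsupp.sum_smul_eq_sum_smul_sub_add (T : G → E →L[𝕜] E) (f : G →₀ 𝕜) (ξ : E) :
    (f.sum fun _ c => c) • ξ =
      (f.sum fun s c => c • (ξ - T s ξ)) + (f.sum fun s c => c • T s) ξ := by
  simp only [Finsupp.sum, Finset.sum_smul, _root_.sum_apply,
    _root_.smul_apply, ← Finset.sum_add_distrib, smul_sub, sub_add_cancel]

theorem norm_finsupp_sum_smul_le (T : G → E →L[𝕜] E) (f : G →₀ 𝕜) (ξ : E) :
    ‖(f.sum fun _ c => c) • ξ‖ ≤
      (∑ s ∈ f.support, ‖f s‖ * ‖T s ξ - ξ‖) + ‖f.sum fun s c => c • T s‖ * ‖ξ‖ := by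
  rw [Finsupp.sum_smul_eq_sum_smul_sub_add T]
  refine (norm_add_le _ _).trans (add_le_add ?_ (ContinuousLinearMap.le_opNorm _ _))
  refine (norm_sum_le _ _).trans (Finset.sum_le_sum fun s _ => ?_)
  rw [norm_smul, norm_sub_rev]

theorem norm_finsupp_sum_le_of_almostInvariant {ι : Type*} {l : Filter ι} [l.NeBot]
    (T : G → E →L[𝕜] E) (ξ : ι → E) (hξ : ∀ α, ‖ξ α‖ = 1)
    (hinv : ∀ s, Tendsto (fun α => ‖T s (ξ α) - ξ α‖) l (𝓝 0)) (f : G →₀ 𝕜) :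
    ‖f.sum fun _ c => c‖ ≤ ‖f.sum fun s c => c • T s‖ := by
  have hbound : ∀ α, ‖f.sum fun _ c => c‖ ≤
      (∑ s ∈ f.support, ‖f s‖ * ‖T s (ξ α) - ξ α‖) + ‖f.sum fun s c => c • T s‖ := fun α => by
    simpa [norm_smul, hξ α] using norm_finsupp_sum_smul_le T f (ξ α)
  have hlim : Tendsto (fun α => (∑ s ∈ f.support, ‖f s‖ * ‖T s (ξ α) - ξ α‖) +
      ‖f.sum fun s c => c • T s‖) l (𝓝 (‖f.sum fun s c => c • T s‖)) := by
    simpa using (tendsto_finsetSum f.support fun s _ => (hinv s).const_mul ‖f s‖).add_const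
      ‖f.sum fun s c => c • T s‖
  exact ge_of_tendsto' hlim hbound

end AlmostInvariant

theorem stmt6_general {G : Type u} [Group G] {p : ℝ≥0∞} [Fact (1 ≤ p)]
    (lam : G → (lp (fun _ : G => ℂ) p →L[ℂ] lp (fun _ : G => ℂ) p))
    (hG : ∃ (ι : Type u) (l : Filter ι) (fα : ι → lp (fun _ : G => ℂ) p), l.NeBot ∧
      (∀ α, IsNonneg (fα α) ∧ ‖fα α‖ = 1) ∧
      ∀ s : G, Tendsto (fun α => ‖lam s (fα α) - fα α‖) l (𝓝 0)) :
    ∀ f : G →₀ ℂ, ‖f.sum fun _ c => c‖ ≤ ‖opOf lam f‖ := by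
  obtain ⟨ι, l, fα, hl, hunit, hinv⟩ := hG
  exact norm_finsupp_sum_le_of_almostInvariant lam fα (fun α => (hunit α).2) hinv

theorem stmt6 {G : Type u} [Group G] [DecidableEq G] {p : ℝ≥0∞} [Fact (1 ≤ p)] (hp : p ≠ ⊤)
    (lam : G → (lp (fun _ : G => ℂ) p →L[ℂ] lp (fun _ : G => ℂ) p))
    (hlam : IsLeftReg lam)
    (hG : ∃ (ι : Type u) (l : Filter ι) (fα : ι → lp (fun _ : G => ℂ) p), l.NeBot ∧
      (∀ α, IsNonneg (fα α) ∧ ‖fα α‖ = 1) ∧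
      ∀ s : G, Tendsto (fun α => ‖lam s (fα α) - fα α‖) l (𝓝 0)) :
    ∀ f : G →₀ ℂ, ‖f.sum fun _ c => c‖ ≤ ‖opOf lam f‖ :=
  stmt6_general lam hG
end

section
/- Let G be a discrete group, p ∈ [1,∞), and suppose there exists a net (η_α) in ℓ^p(G) of nonnegative unit vectors such that ‖λ_p(s)η_α − η_α‖_p → 0 for all s ∈ G. Then for every finite subset E ⊆ G, ‖Σ_{t∈E} λ_p(t)‖ = |E|. -/
open scoped ENNReal ComplexOrder
open Filter Topology

/-- The left regular representation is isometric. -/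
lemma lam_isometry {G : Type*} [Group G] [DecidableEq G] {p : ℝ≥0∞} [Fact (1 ≤ p)]
    (hp : p ≠ ⊤)
    (lam : G → (lp (fun _ : G => ℂ) p →L[ℂ] lp (fun _ : G => ℂ) p))
    (hlam : IsLeftReg lam) (s : G) (ξ : lp (fun _ : G => ℂ) p) :
    ‖lam s ξ‖ = ‖ξ‖ := by
  have hp1 : (1 : ℝ≥0∞) ≤ p := Fact.out
  have hp0 : p ≠ 0 := fun h => by simp [h] at hp1
  have hpr : 0 < p.toReal := ENNReal.toReal_pos hp0 hp
  have hsum : HasSum (fun t => lp.single (E := fun _ : G => ℂ) p (s * t) (ξ t)) (lam s ξ) := by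
    have h := (lp.hasSum_single hp ξ).mapL (lam s)
    convert h using 2 with t
    have h1 : lp.single (E := fun _ : G => ℂ) p t (ξ t) = ξ t • lp.single p t (1 : ℂ) := by
      rw [← lp.single_smul, smul_eq_mul, mul_one]
    have h2 : lp.single (E := fun _ : G => ℂ) p (s * t) (ξ t)
        = ξ t • lp.single p (s * t) (1 : ℂ) := by
      rw [← lp.single_smul, smul_eq_mul, mul_one]
    rw [h1, h2, map_smul, hlam s t]
  have hmem : Memℓp (fun u : G => ξ (s⁻¹ * u)) p := by
    apply memℓp_gen
    have h := (lp.memℓp ξ).summable hpr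
    exact ((Equiv.mulLeft s⁻¹).summable_iff
      (f := fun t : G => ‖ξ t‖ ^ p.toReal)).mpr h
  set ζ : lp (fun _ : G => ℂ) p := ⟨fun u => ξ (s⁻¹ * u), hmem⟩ with hζ
  have hζapp : ∀ u, ζ u = ξ (s⁻¹ * u) := fun u => rfl
  have hζsum : HasSum (fun t => lp.single (E := fun _ : G => ℂ) p (s * t) (ξ t)) ζ := by
    have h := lp.hasSum_single hp ζ
    have h2 := ((Equiv.mulLeft s).hasSum_iff
      (f := fun u => lp.single (E := fun _ : G => ℂ) p u (ζ u)) (a := ζ)).mpr h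
    convert h2 using 2 with t
    simp only [Function.comp, Equiv.coe_mulLeft, hζapp, inv_mul_cancel_left]
  have heq : lam s ξ = ζ := hsum.unique hζsum
  have hn1 : HasSum (fun u => ‖ζ u‖ ^ p.toReal) (‖ζ‖ ^ p.toReal) := lp.hasSum_norm hpr ζ
  have hn2 : HasSum (fun t => ‖ξ t‖ ^ p.toReal) (‖ξ‖ ^ p.toReal) := lp.hasSum_norm hpr ξ
  have hn3 : HasSum (fun t => ‖ξ t‖ ^ p.toReal) (‖ζ‖ ^ p.toReal) := by
    have h2 := ((Equiv.mulLeft s).hasSum_iff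
      (f := fun u => ‖ζ u‖ ^ p.toReal) (a := ‖ζ‖ ^ p.toReal)).mpr hn1
    convert h2 using 2 with t
    simp only [Function.comp, Equiv.coe_mulLeft, hζapp, inv_mul_cancel_left]
  have : ‖ζ‖ ^ p.toReal = ‖ξ‖ ^ p.toReal := hn3.unique hn2
  rw [heq]
  exact Real.rpow_left_injOn (ne_of_gt hpr) (norm_nonneg ζ) (norm_nonneg ξ) this

theorem stmt13 {G : Type u} [Group G] [DecidableEq G] {p : ℝ≥0∞} [Fact (1 ≤ p)] (hp : p ≠ ⊤)
    (lam : G → (lp (fun _ : G => ℂ) p →L[ℂ] lp (fun _ : G => ℂ) p))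
    (hlam : IsLeftReg lam)
    (hG : ∃ (ι : Type u) (l : Filter ι) (η : ι → lp (fun _ : G => ℂ) p), l.NeBot ∧
      (∀ α, IsNonneg (η α) ∧ ‖η α‖ = 1) ∧
      ∀ s : G, Tendsto (fun α => ‖lam s (η α) - η α‖) l (𝓝 0)) :
    ∀ E : Finset G, ‖∑ t ∈ E, lam t‖ = (E.card : ℝ) := by
  intro E
  obtain ⟨ι, l, η, hl, hη, htend⟩ := hG
  -- upper bound
  have hub : ‖∑ t ∈ E, lam t‖ ≤ (E.card : ℝ) := by
    calc ‖∑ t ∈ E, lam t‖ ≤ ∑ t ∈ E, ‖lam t‖ := norm_sum_le _ _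
    _ ≤ ∑ _t ∈ E, (1 : ℝ) := by
        refine Finset.sum_le_sum fun t _ => ?_
        refine ContinuousLinearMap.opNorm_le_bound _ zero_le_one fun x => ?_
        rw [lam_isometry hp lam hlam t x, one_mul]
    _ = (E.card : ℝ) := by simp
  -- lower bound
  have hlb : (E.card : ℝ) ≤ ‖∑ t ∈ E, lam t‖ := by
    have key : ∀ α, (E.card : ℝ) - ∑ t ∈ E, ‖lam t (η α) - η α‖ ≤ ‖∑ t ∈ E, lam t‖ := by
      intro α
      obtain ⟨-, hnorm⟩ := hη α
      have h2 : ‖(∑ t ∈ E, lam t) (η α)‖ ≤ ‖∑ t ∈ E, lam t‖ := by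
        calc ‖(∑ t ∈ E, lam t) (η α)‖ ≤ ‖∑ t ∈ E, lam t‖ * ‖η α‖ :=
          ContinuousLinearMap.le_opNorm _ _
        _ = ‖∑ t ∈ E, lam t‖ := by rw [hnorm, mul_one]
      have h3 : ∑ t ∈ E, (lam t (η α) - η α) = (∑ t ∈ E, lam t) (η α) - E.card • η α := by
        rw [Finset.sum_sub_distrib, Finset.sum_const]
        simp [ContinuousLinearMap.sum_apply]
      have h4 : (E.card : ℝ) - ‖(∑ t ∈ E, lam t) (η α)‖ ≤ ∑ t ∈ E, ‖lam t (η α) - η α‖ := by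
        have h5 : ‖E.card • η α‖ = (E.card : ℝ) := by
          rw [← Nat.cast_smul_eq_nsmul ℝ, norm_smul, hnorm, mul_one]; simp
        calc (E.card : ℝ) - ‖(∑ t ∈ E, lam t) (η α)‖
            = ‖E.card • η α‖ - ‖(∑ t ∈ E, lam t) (η α)‖ := by rw [h5]
          _ ≤ ‖E.card • η α - (∑ t ∈ E, lam t) (η α)‖ := norm_sub_norm_le _ _
          _ = ‖∑ t ∈ E, (lam t (η α) - η α)‖ := by rw [h3, ← norm_neg]; congr 1; abel
          _ ≤ ∑ t ∈ E, ‖lam t (η α) - η α‖ := norm_sum_le _ _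
      linarith
    have hT : Tendsto (fun α => (E.card : ℝ) - ∑ t ∈ E, ‖lam t (η α) - η α‖) l
        (𝓝 ((E.card : ℝ))) := by
      have hs : Tendsto (fun α => ∑ t ∈ E, ‖lam t (η α) - η α‖) l (𝓝 0) := by
        have := tendsto_finset_sum E (fun t _ => htend t)
        simpa using this
      have := (tendsto_const_nhds (x := (E.card : ℝ)) (f := l)).sub hs
      simpa using this
    exact le_of_tendsto hT (Eventually.of_forall key)
  linarith
end

section
/- Let G be a discrete group and p ∈ (1,∞). If G is amenable, then for every finitely supported f : G → ℂ with f ≥ 0, ‖λ_p(f)‖ = Σ_{t∈G} f(t), i.e. the operator norm of λ_p(f) on ℓ^p(G) equals the ℓ¹-norm of f. -/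
open scoped ENNReal ComplexOrder
open Filter Topology

section Aux
variable {G : Type*} [Group G] [DecidableEq G] {p : ℝ≥0∞} [Fact (1 ≤ p)]

/-- Evaluation at a coordinate as a continuous linear map on `ℓ^p`. -/
noncomputable def evalCLM' (hp0 : p ≠ 0) (u : G) : lp (fun _ : G => ℂ) p →L[ℂ] ℂ :=
  LinearMap.mkContinuous
    { toFun := fun ξ => ξ u
      map_add' := fun ξ η => congrFun (lp.coeFn_add ξ η) u
      map_smul' := fun c ξ => congrFun (lp.coeFn_smul c ξ) u }
    1 (fun ξ => by simpa using lp.norm_apply_le_norm hp0 ξ u)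

theorem leftReg_apply' (hp' : p ≠ ⊤)
    {lam : G → (lp (fun _ : G => ℂ) p →L[ℂ] lp (fun _ : G => ℂ) p)}
    (hlam : IsLeftReg lam) (s : G) (ξ : lp (fun _ : G => ℂ) p) (u : G) :
    (lam s ξ) u = ξ (s⁻¹ * u) := by
  have hp0 : p ≠ 0 := (zero_lt_one.trans_le (Fact.out : 1 ≤ p)).ne'
  have h1 : HasSum (fun t => lp.single (E := fun _ : G => ℂ) p t (ξ t)) ξ :=
    lp.hasSum_single hp' ξ
  have h2 := (lam s).hasSum h1
  have h3 : ∀ t, lam s (lp.single (E := fun _ : G => ℂ) p t (ξ t)) =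
      lp.single (E := fun _ : G => ℂ) p (s * t) (ξ t) := by
    intro t
    have e1 : lp.single (E := fun _ : G => ℂ) p t (ξ t)
        = (ξ t) • lp.single (E := fun _ : G => ℂ) p t 1 := by
      rw [← lp.single_smul]; norm_num
    have e2 : lp.single (E := fun _ : G => ℂ) p (s * t) (ξ t)
        = (ξ t) • lp.single (E := fun _ : G => ℂ) p (s * t) 1 := by
      rw [← lp.single_smul]; norm_num
    rw [e1, map_smul, hlam s t, e2]
  simp_rw [h3] at h2
  have h4 := (evalCLM' hp0 u).hasSum h2
  have h4' : HasSum (fun t => (lp.single (E := fun _ : G => ℂ) p (s * t) (ξ t) : ∀ _ : G, ℂ) u)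
      ((lam s ξ) u) := h4
  refine h4'.unique ?_
  have h5 : ∀ t, t ≠ s⁻¹ * u →
      (lp.single (E := fun _ : G => ℂ) p (s * t) (ξ t) : ∀ _ : G, ℂ) u = 0 := by
    intro t ht
    refine lp.single_apply_ne p (s * t) _ ?_
    intro h; apply ht; rw [h]; group
  have := hasSum_single
    (f := fun t => (lp.single (E := fun _ : G => ℂ) p (s * t) (ξ t) : ∀ _ : G, ℂ) u)
    (s⁻¹ * u) h5
  simpa [mul_inv_cancel_left, lp.single_apply_self] using this

theorem leftReg_norm' (hp' : p ≠ ⊤)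
    {lam : G → (lp (fun _ : G => ℂ) p →L[ℂ] lp (fun _ : G => ℂ) p)}
    (hlam : IsLeftReg lam) (s : G) (ξ : lp (fun _ : G => ℂ) p) :
    ‖lam s ξ‖ = ‖ξ‖ := by
  have hp0 : p ≠ 0 := (zero_lt_one.trans_le (Fact.out : 1 ≤ p)).ne'
  have hpt : 0 < p.toReal := ENNReal.toReal_pos hp0 hp'
  have hA := lp.hasSum_norm hpt (lam s ξ)
  have hA' : HasSum (fun u => ‖ξ (s⁻¹ * u)‖ ^ p.toReal) (‖lam s ξ‖ ^ p.toReal) := by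
    simpa [leftReg_apply' hp' hlam s ξ] using hA
  have hB := lp.hasSum_norm hpt ξ
  have hB' : HasSum (fun u => ‖ξ (s⁻¹ * u)‖ ^ p.toReal) (‖ξ‖ ^ p.toReal) := by
    refine (Equiv.mulLeft s).hasSum_iff.mp ?_
    simpa [Function.comp_def, inv_mul_cancel_left] using hB
  exact Real.rpow_left_injOn hpt.ne' (norm_nonneg _) (norm_nonneg _) (hA'.unique hB')

theorem leftReg_opNorm_le (hp' : p ≠ ⊤)
    {lam : G → (lp (fun _ : G => ℂ) p →L[ℂ] lp (fun _ : G => ℂ) p)}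
    (hlam : IsLeftReg lam) (s : G) : ‖lam s‖ ≤ 1 :=
  (lam s).opNorm_le_bound zero_le_one (fun ξ => by rw [leftReg_norm' hp' hlam, one_mul])

end Aux

theorem stmt17 {G : Type u} [Group G] [DecidableEq G] {p : ℝ≥0∞} [Fact (1 ≤ p)]
    (hp : 1 < p) (hp' : p ≠ ⊤)
    (lam : G → (lp (fun _ : G => ℂ) p →L[ℂ] lp (fun _ : G => ℂ) p))
    (hlam : IsLeftReg lam)
    (hG : ∃ (ι : Type u) (l : Filter ι) (fα : ι → lp (fun _ : G => ℂ) p), l.NeBot ∧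
      (∀ α, IsNonneg (fα α) ∧ ‖fα α‖ = 1) ∧
      ∀ s : G, Tendsto (fun α => ‖lam s (fα α) - fα α‖) l (𝓝 0))
    (f : G →₀ ℂ) (hf : ∀ t : G, 0 ≤ f t) :
    (‖opOf lam f‖ : ℂ) = f.sum fun _ c => c := by
  set r : G → ℝ := fun t => (f t).re with hr
  have hfr : ∀ t, f t = (r t : ℂ) := by
    intro t
    obtain ⟨h1, h2⟩ := Complex.nonneg_iff.mp (hf t)
    exact Complex.ext rfl h2.symm
  have hr0 : ∀ t, 0 ≤ r t := fun t => (Complex.nonneg_iff.mp (hf t)).1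
  have hnorm : ∀ t, ‖f t‖ = r t := by
    intro t; rw [hfr t, Complex.norm_real]; exact Real.norm_of_nonneg (hr0 t)
  set S : ℝ := ∑ t ∈ f.support, r t with hS
  have hS0 : 0 ≤ S := Finset.sum_nonneg fun t _ => hr0 t
  have hsumC : (∑ t ∈ f.support, f t) = (S : ℂ) := by
    rw [hS]; push_cast
    exact Finset.sum_congr rfl fun t _ => hfr t
  have hRHS : (f.sum fun _ c => c) = (S : ℂ) := by
    rw [Finsupp.sum]; exact hsumC
  have hT : opOf lam f = ∑ t ∈ f.support, f t • lam t := by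
    rw [opOf, Finsupp.sum]
  -- Upper bound
  have hub : ‖opOf lam f‖ ≤ S := by
    rw [hT]
    refine (norm_sum_le _ _).trans ?_
    rw [hS]
    refine Finset.sum_le_sum fun t _ => ?_
    calc ‖f t • lam t‖ ≤ ‖f t‖ * ‖lam t‖ := ContinuousLinearMap.opNorm_smul_le _ _
      _ = r t * ‖lam t‖ := by rw [hnorm t]
      _ ≤ r t * 1 := mul_le_mul_of_nonneg_left (leftReg_opNorm_le hp' hlam t) (hr0 t)
      _ = r t := mul_one _
  -- Lower bound
  obtain ⟨ι, l, fα, hl, hunit, hinv⟩ := hG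
  have key : ∀ α, S - (∑ t ∈ f.support, r t * ‖lam t (fα α) - fα α‖) ≤ ‖opOf lam f‖ := by
    intro α
    set ξ := fα α with hξdef
    have hξ : ‖ξ‖ = 1 := (hunit α).2
    have hTξ : opOf lam f ξ = ∑ t ∈ f.support, f t • (lam t ξ) := by
      rw [hT, ContinuousLinearMap.sum_apply]
      simp only [ContinuousLinearMap.smul_apply]
    have hSξ : (S : ℂ) • ξ = ∑ t ∈ f.support, f t • ξ := by
      rw [← Finset.sum_smul, hsumC]
    have hdiff : ‖opOf lam f ξ - (S : ℂ) • ξ‖ ≤ ∑ t ∈ f.support, r t * ‖lam t ξ - ξ‖ := by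
      rw [hTξ, hSξ, ← Finset.sum_sub_distrib]
      refine (norm_sum_le _ _).trans (Finset.sum_le_sum fun t _ => ?_)
      rw [← smul_sub, norm_smul, hnorm t]
    have h1 : ‖opOf lam f ξ‖ ≤ ‖opOf lam f‖ := by
      simpa [hξ] using (opOf lam f).le_opNorm ξ
    have h2 : ‖(S : ℂ) • ξ‖ = S := by
      rw [norm_smul, hξ, mul_one, Complex.norm_real]; exact Real.norm_of_nonneg hS0
    have h3 : ‖(S : ℂ) • ξ‖ - ‖opOf lam f ξ‖ ≤ ‖opOf lam f ξ - (S : ℂ) • ξ‖ := by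
      rw [norm_sub_rev]
      exact (norm_sub_norm_le _ _).trans (le_refl _)
    linarith
  have herr : Tendsto (fun α => ∑ t ∈ f.support, r t * ‖lam t (fα α) - fα α‖) l (𝓝 0) := by
    have h := tendsto_finset_sum f.support
      (fun t (_ : t ∈ f.support) => (hinv t).const_mul (r t))
    simpa only [mul_zero, Finset.sum_const_zero] using h
  have hlim : Tendsto (fun α => S - ∑ t ∈ f.support, r t * ‖lam t (fα α) - fα α‖) l (𝓝 S) := by
    simpa only [sub_zero] using tendsto_const_nhds.sub herr
  have hlb : S ≤ ‖opOf lam f‖ := le_of_tendsto hlim (Eventually.of_forall key)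
  have : ‖opOf lam f‖ = S := le_antisymm hub hlb
  rw [this, hRHS]
end
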